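/- arXiv:2203.03777 — 2 statements merged into one kernel-verified Lean document; each statement's English description precedes it below -/
import Mathlib

section
/- Let f be continuous on [α,β] and let τ : [α,β] → [α,β] be continuously differentiable with τ(α)=α, τ(β)=β, and τ' > 0 on [α,β]. Define C̃_n^τ[f,[α,β]](x) = ∑_{k=0}^n f(τ^{-1}((β-α)k/n + α)) · p̃_{n,k}(τ(x);[α,β]). Then C̃_n^τ[f,[α,β]] converges uniformly to f on [α,β] as n → ∞. -/
open Finset

/-- Shifted Bernstein basis polynomial on `[α, β]`. -/
noncomputable def ptilde (α β : ℝ) (n k : ℕ) (x : ℝ) : ℝ :=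
  (1 / (β - α) ^ n) * (n.choose k : ℝ) * (x - α) ^ k * (β - x) ^ (n - k)

/-- The shifted Bernstein-type operator
`C̃_n^τ[f,[α,β]](x) = ∑_k f(σ((β-α)k/n + α)) p̃_{n,k}(τ(x);[α,β])`,
where `σ` is the inverse of `τ` on `[α,β]`. -/
noncomputable def Ctilde (α β : ℝ) (τ σ : ℝ → ℝ) (n : ℕ) (f : ℝ → ℝ) (x : ℝ) : ℝ :=
  ∑ k ∈ Finset.range (n + 1),
    f (σ ((β - α) * (k : ℝ) / n + α)) * ptilde α β n k (τ x)

/-!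
`Ctilde α β id id n` is the Bernstein operator of `[α, β]`, and `Ctilde α β τ σ n f` is, by
definition, `Ctilde α β id id n (f ∘ σ) ∘ τ`. Since `τ` is a continuous bijection of the compact
interval `[α, β]` onto itself (onto by the intermediate value theorem), its inverse `σ` is
continuous there, so `f ∘ σ` is continuous. Bernstein's theorem, transported from `[0, 1]` by an
affine change of variables, gives `Ctilde α β id id n (f ∘ σ) → f ∘ σ` uniformly on `[α, β]`;
precomposing with `τ`, which maps `[α, β]` into itself, yields uniform convergence to
`f ∘ σ ∘ τ = f`.
-/

open Filter Set

theorem IsCompact.continuousOn_image_of_leftInvOn {X Y : Type*} [TopologicalSpace X]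
    [TopologicalSpace Y] [T2Space Y] {f : X → Y} {finv : Y → X} {s : Set X}
    (hs : IsCompact s) (hf : ContinuousOn f s) (hleft : LeftInvOn finv f s) :
    ContinuousOn finv (f '' s) := by
  refine continuousOn_iff_isClosed.2 fun t ht => ⟨f '' (t ∩ s), ?_, ?_⟩
  · exact ((hs.inter_left ht).image_of_continuousOn (hf.mono inter_subset_right)).isClosed
  · rw [← hleft.image_inter', inter_eq_self_of_subset_left (image_mono inter_subset_right)]

theorem ptilde_zero_one (n k : ℕ) (t : ℝ) :
    ptilde 0 1 n k t = n.choose k * t ^ k * (1 - t) ^ (n - k) := by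
  simp [ptilde]

theorem ptilde_eq_ptilde_zero_one {α β : ℝ} (h : α ≠ β) (n k : ℕ) (y : ℝ) :
    ptilde α β n k y = ptilde 0 1 n k ((y - α) / (β - α)) := by
  have hβα : β - α ≠ 0 := sub_ne_zero.2 h.symm
  rcases le_or_gt k n with hkn | hnk
  · have hpow : (β - α) ^ n = (β - α) ^ k * (β - α) ^ (n - k) := by
      rw [← pow_add, Nat.add_sub_cancel' hkn]
    rw [ptilde_zero_one, ptilde, one_sub_div hβα, div_pow, div_pow, hpow]
    field_simp
    ring
  · simp [ptilde, Nat.choose_eq_zero_of_lt hnk]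

theorem Ctilde_id_zero_one_tendstoUniformlyOn {g : ℝ → ℝ} (hg : ContinuousOn g (Icc 0 1)) :
    TendstoUniformlyOn (fun n => Ctilde 0 1 id id n g) g atTop (Icc 0 1) := by
  let gI : C(unitInterval, ℝ) := ⟨(Set.Icc 0 1).domRestrict g, hg.domRestrict⟩
  have hB := bernsteinApproximation_uniform gI
  rw [ContinuousMap.tendsto_iff_tendstoUniformly] at hB
  rw [tendstoUniformlyOn_iff_tendstoUniformly_comp_coe]
  convert hB using 1
  · ext n t
    rw [bernsteinApproximation.apply, Ctilde, Finset.sum_range]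
    refine Finset.sum_congr rfl fun k _ => ?_
    rw [bernstein_apply, ptilde_zero_one, smul_eq_mul]
    simp only [sub_zero, one_mul, add_zero, id_eq, bernstein.z, ContinuousMap.coe_mk,
      domRestrict_apply, gI]
    ring
  · rfl

theorem Ctilde_id_eq_Ctilde_id_zero_one {α β : ℝ} (h : α ≠ β) (n : ℕ) (g : ℝ → ℝ) (y : ℝ) :
    Ctilde α β id id n g y =
      Ctilde 0 1 id id n (fun t => g ((β - α) * t + α)) ((y - α) / (β - α)) := by
  simp only [Ctilde, id, ptilde_eq_ptilde_zero_one h, sub_zero, one_mul, add_zero, mul_div_assoc]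

theorem Ctilde_id_tendstoUniformlyOn {α β : ℝ} (h : α < β) {g : ℝ → ℝ}
    (hg : ContinuousOn g (Icc α β)) :
    TendstoUniformlyOn (fun n => Ctilde α β id id n g) g atTop (Icc α β) := by
  have hβα : 0 < β - α := sub_pos.2 h
  set φ : ℝ → ℝ := fun y => (y - α) / (β - α)
  set ψ : ℝ → ℝ := fun t => (β - α) * t + α
  have hψ : MapsTo ψ (Icc 0 1) (Icc α β) := fun t ht =>
    ⟨by nlinarith [ht.1], by nlinarith [ht.2]⟩
  have hφ : MapsTo φ (Icc α β) (Icc 0 1) := fun y hy =>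
    ⟨div_nonneg (by linarith [hy.1]) hβα.le, (div_le_one hβα).2 (by linarith [hy.2])⟩
  have hψφ : ∀ y, ψ (φ y) = y := fun y => by simp only [ψ, φ]; field_simp; ring
  have hB := (Ctilde_id_zero_one_tendstoUniformlyOn
    (hg.comp (by fun_prop) hψ)).comp φ |>.mono hφ
  refine (hB.congr (Eventually.of_forall fun n y _ => ?_)).congr_right fun y _ => ?_
  · exact (Ctilde_id_eq_Ctilde_id_zero_one h.ne n g y).symm
  · exact congrArg g (hψφ y)

theorem Ctilde_tendstoUniformly_general (α β : ℝ) (h : α < β) (τ σ f : ℝ → ℝ)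
    (hτ : ContDiffOn ℝ 1 τ (Set.Icc α β))
    (hmap : Set.MapsTo τ (Set.Icc α β) (Set.Icc α β))
    (hτα : τ α = α) (hτβ : τ β = β)
    (hσ : ∀ x ∈ Set.Icc α β, σ (τ x) = x)
    (hf : ContinuousOn f (Set.Icc α β)) :
    TendstoUniformlyOn (fun n x => Ctilde α β τ σ n f x) f Filter.atTop (Set.Icc α β) := by
  have hτc : ContinuousOn τ (Icc α β) := hτ.continuousOn
  have hsurj : SurjOn τ (Icc α β) (Icc α β) := by
    rw [SurjOn]
    simpa only [hτα, hτβ] using intermediate_value_Icc h.le hτc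
  have hσc : ContinuousOn σ (Icc α β) := by
    simpa only [hsurj.image_eq_of_mapsTo hmap] using
      isCompact_Icc.continuousOn_image_of_leftInvOn hτc hσ
  have hfσ : ContinuousOn (f ∘ σ) (Icc α β) := hf.comp hσc (LeftInvOn.mapsTo hσ hsurj)
  refine ((Ctilde_id_tendstoUniformlyOn h hfσ).comp τ).mono hmap |>.congr_right fun x hx => ?_
  exact congrArg f (hσ x hx)

theorem Ctilde_tendstoUniformly (α β : ℝ) (h : α < β) (τ σ f : ℝ → ℝ)
    (hτ : ContDiffOn ℝ 1 τ (Set.Icc α β))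
    (hmap : Set.MapsTo τ (Set.Icc α β) (Set.Icc α β))
    (hτα : τ α = α) (hτβ : τ β = β)
    (hτ' : ∀ x ∈ Set.Icc α β, 0 < derivWithin τ (Set.Icc α β) x)
    (hσ : ∀ x ∈ Set.Icc α β, σ (τ x) = x)
    (hσ' : ∀ u ∈ Set.Icc α β, τ (σ u) = u)
    (hf : ContinuousOn f (Set.Icc α β)) :
    TendstoUniformlyOn (fun n x => Ctilde α β τ σ n f x) f Filter.atTop (Set.Icc α β) :=
  Ctilde_tendstoUniformly_general α β h τ σ f hτ hmap hτα hτβ hσ hf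
end

section
/- Let f be continuous on the standard 2-simplex T² = {(x,y) : x ≥ 0, y ≥ 0, x+y ≤ 1}. Then the Bernstein–Stancu polynomials B_n[f](x,y) = ∑_{k+j ≤ n} f(k/n, j/n) · (n! / (k! j! (n-k-j)!)) · x^k y^j (1-x-y)^{n-k-j} converge uniformly to f on T² as n → ∞. -/
open Finset

/-- The standard 2-simplex in `ℝ²`. -/
def simplexT2 : Set (ℝ × ℝ) := {p | 0 ≤ p.1 ∧ 0 ≤ p.2 ∧ p.1 + p.2 ≤ 1}

/-- The Bernstein–Stancu polynomial on the simplex; note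
`n!/(k! j! (n-k-j)!) = C(n,k)·C(n-k,j)` for `k + j ≤ n`. -/
noncomputable def bernsteinSimplex (n : ℕ) (f : ℝ × ℝ → ℝ) (p : ℝ × ℝ) : ℝ :=
  ∑ k ∈ Finset.range (n + 1), ∑ j ∈ Finset.range (n - k + 1),
    f ((k : ℝ) / n, (j : ℝ) / n) * (n.choose k : ℝ) * ((n - k).choose j : ℝ) *
      p.1 ^ k * p.2 ^ j * (1 - p.1 - p.2) ^ (n - k - j)

/-!
`bernsteinSimplex n f p` is the expectation of `f (X / n, Y / n)` for a trinomial vector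
`(X, Y, n - X - Y)` with cell probabilities `(x, y, 1 - x - y)`, whose marginals `X` and `Y` are
binomial. So the weights sum to one, and the one-dimensional Bernstein variance identity gives
the second moment `∑ w · ((X/n - x)² + (Y/n - y)²) = (x (1 - x) + y (1 - y)) / n ≤ 1 / n`.
Uniform continuity and the bound `M` of `f` on the compact simplex give
`|f q - f p| ≤ ε + 2M/δ² · dist q p²`, and averaging this over the nodes bounds
`|B_n f p - f p|` by `ε + 2M / (δ² n)`, uniformly in `p`.
-/

open Filter

lemma isCompact_simplexT2 : IsCompact simplexT2 := by
  refine (isCompact_Icc (a := ((0 : ℝ), (0 : ℝ))) (b := (1, 1))).of_isClosed_subset ?_ ?_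
  · show IsClosed ({p : ℝ × ℝ | 0 ≤ p.1} ∩ ({p | 0 ≤ p.2} ∩ {p | p.1 + p.2 ≤ 1}))
    exact (isClosed_le continuous_const continuous_fst).inter
      ((isClosed_le continuous_const continuous_snd).inter
        (isClosed_le (continuous_fst.add continuous_snd) continuous_const))
  · rintro p ⟨h₁, h₂, h₃⟩
    exact ⟨⟨h₁, h₂⟩, ⟨by linarith, by linarith⟩⟩

lemma Prod.dist_sq_le_sq_add_sq (p q : ℝ × ℝ) :
    dist p q ^ 2 ≤ (p.1 - q.1) ^ 2 + (p.2 - q.2) ^ 2 := by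
  rw [Prod.dist_eq, Real.dist_eq, Real.dist_eq]
  rcases le_total |p.1 - q.1| |p.2 - q.2| with h | h
  · rw [max_eq_right h, sq_abs]; nlinarith
  · rw [max_eq_left h, sq_abs]; nlinarith

lemma dist_le_add_mul_dist_sq {X E : Type*} [PseudoMetricSpace X] [SeminormedAddCommGroup E]
    {f : X → E} {x y : X} {M ε δ : ℝ} (hε : 0 ≤ ε) (hδ : 0 < δ) (hx : ‖f x‖ ≤ M) (hy : ‖f y‖ ≤ M)
    (hf : dist x y < δ → dist (f x) (f y) < ε) :
    dist (f x) (f y) ≤ ε + 2 * M / δ ^ 2 * dist x y ^ 2 := by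
  have hM : dist (f x) (f y) ≤ 2 * M := (dist_le_norm_add_norm _ _).trans (by linarith)
  have hM₀ : 0 ≤ M := (norm_nonneg _).trans hx
  rcases lt_or_ge (dist x y) δ with hlt | hge
  · have : 0 ≤ 2 * M / δ ^ 2 * dist x y ^ 2 := by positivity
    linarith [hf hlt]
  · have hδ₂ : 1 ≤ dist x y ^ 2 / δ ^ 2 := by
      rw [one_le_div (by positivity)]; gcongr
    calc dist (f x) (f y) ≤ 2 * M * 1 := by linarith
      _ ≤ ε + 2 * M / δ ^ 2 * dist x y ^ 2 := by
        rw [div_mul_eq_mul_div, mul_div_assoc]; nlinarith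

lemma abs_sum_mul_sub_le {ι : Type*} {s : Finset ι} {w g h : ι → ℝ} {c : ℝ}
    (hw : ∀ i ∈ s, 0 ≤ w i) (hw₁ : ∑ i ∈ s, w i = 1) (hg : ∀ i ∈ s, |g i - c| ≤ h i) :
    |∑ i ∈ s, w i * g i - c| ≤ ∑ i ∈ s, w i * h i := by
  calc |∑ i ∈ s, w i * g i - c| = |∑ i ∈ s, w i * (g i - c)| := by
        simp only [mul_sub, sum_sub_distrib, ← sum_mul, hw₁, one_mul]
    _ ≤ ∑ i ∈ s, |w i * (g i - c)| := abs_sum_le_sum_abs _ _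
    _ ≤ ∑ i ∈ s, w i * h i := sum_le_sum fun i hi => by
        rw [abs_mul, abs_of_nonneg (hw i hi)]
        exact mul_le_mul_of_nonneg_left (hg i hi) (hw i hi)

lemma Nat.choose_mul_choose_sub_comm (n k j : ℕ) :
    n.choose k * (n - k).choose j = n.choose j * (n - j).choose k := by
  have hk := Nat.choose_mul (n := n) (Nat.le_add_right k j)
  have hj := Nat.choose_mul (n := n) (Nat.le_add_left j k)
  rw [Nat.add_sub_cancel_left] at hk
  rw [Nat.add_sub_cancel] at hj
  rw [← hk, ← hj, Nat.choose_symm_add]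

lemma sum_range_sum_range_sub_comm {M : Type*} [AddCommMonoid M] (n : ℕ) (g : ℕ → ℕ → M) :
    ∑ k ∈ range (n + 1), ∑ j ∈ range (n - k + 1), g k j
      = ∑ k ∈ range (n + 1), ∑ j ∈ range (n - k + 1), g j k :=
  sum_comm' fun k j => by simp only [mem_range]; omega

lemma sum_choose_mul_pow_mul_one_sub_pow (n : ℕ) (t : ℝ) :
    ∑ k ∈ range (n + 1), (n.choose k : ℝ) * t ^ k * (1 - t) ^ (n - k) = 1 := by
  calc _ = (t + (1 - t)) ^ n := by
        rw [add_pow]; exact sum_congr rfl fun k _ => by ring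
    _ = 1 := by simp

lemma sum_choose_mul_pow_mul_one_sub_pow_mul_sq (n : ℕ) (hn : n ≠ 0) (t : ℝ) :
    ∑ k ∈ range (n + 1), (n.choose k : ℝ) * t ^ k * (1 - t) ^ (n - k) * ((k : ℝ) / n - t) ^ 2
      = t * (1 - t) / n := by
  have h := congrArg (Polynomial.eval t) (bernsteinPolynomial.variance ℝ n)
  simp only [bernsteinPolynomial, Polynomial.eval_finsetSum, nsmul_eq_mul, Polynomial.eval_mul,
    Polynomial.eval_pow, Polynomial.eval_sub, Polynomial.eval_natCast, Polynomial.eval_X,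
    Polynomial.eval_one] at h
  have hn' : (n : ℝ) ≠ 0 := by exact_mod_cast hn
  calc _ = (∑ k ∈ range (n + 1), ((n : ℝ) * t - k) ^ 2 *
          ((n.choose k : ℝ) * t ^ k * (1 - t) ^ (n - k))) / (n : ℝ) ^ 2 := by
        rw [sum_div]; exact sum_congr rfl fun k _ => by field_simp; ring
    _ = t * (1 - t) / n := by rw [h]; field_simp

noncomputable def simplexWeight (n k j : ℕ) (p : ℝ × ℝ) : ℝ :=
  (n.choose k : ℝ) * ((n - k).choose j : ℝ) * p.1 ^ k * p.2 ^ j * (1 - p.1 - p.2) ^ (n - k - j)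

def simplexIndex (n : ℕ) : Finset (Σ _ : ℕ, ℕ) :=
  (range (n + 1)).sigma fun k => range (n - k + 1)

lemma bernsteinSimplex_eq_sum (n : ℕ) (f : ℝ × ℝ → ℝ) (p : ℝ × ℝ) :
    bernsteinSimplex n f p
      = ∑ i ∈ simplexIndex n, simplexWeight n i.1 i.2 p * f ((i.1 : ℝ) / n, (i.2 : ℝ) / n) := by
  rw [simplexIndex, sum_sigma]
  exact sum_congr rfl fun k _ => sum_congr rfl fun j _ => by
    simp only [simplexWeight]; ring

lemma simplexWeight_nonneg {n k j : ℕ} {p : ℝ × ℝ} (hp : p ∈ simplexT2) :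
    0 ≤ simplexWeight n k j p := by
  obtain ⟨h₁, h₂, h₃⟩ := hp
  have : 0 ≤ 1 - p.1 - p.2 := by linarith
  unfold simplexWeight
  positivity

lemma simplexWeight_swap (n k j : ℕ) (p : ℝ × ℝ) :
    simplexWeight n k j p.swap = simplexWeight n j k p := by
  simp only [simplexWeight, Prod.fst_swap, Prod.snd_swap]
  rw [← Nat.cast_mul, ← Nat.cast_mul, Nat.choose_mul_choose_sub_comm, Nat.sub_right_comm]
  ring

lemma sum_simplexWeight_mul_fst (n : ℕ) (p : ℝ × ℝ) (F : ℕ → ℝ) :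
    ∑ k ∈ range (n + 1), ∑ j ∈ range (n - k + 1), simplexWeight n k j p * F k
      = ∑ k ∈ range (n + 1), (n.choose k : ℝ) * p.1 ^ k * (1 - p.1) ^ (n - k) * F k := by
  refine sum_congr rfl fun k _ => ?_
  calc _ = (n.choose k : ℝ) * p.1 ^ k * F k * (p.2 + (1 - p.1 - p.2)) ^ (n - k) := by
        rw [add_pow, mul_sum]
        exact sum_congr rfl fun j _ => by simp only [simplexWeight]; ring
    _ = _ := by rw [add_sub_cancel]; ring

lemma sum_simplexWeight_mul_snd (n : ℕ) (p : ℝ × ℝ) (F : ℕ → ℝ) :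
    ∑ k ∈ range (n + 1), ∑ j ∈ range (n - k + 1), simplexWeight n k j p * F j
      = ∑ j ∈ range (n + 1), (n.choose j : ℝ) * p.2 ^ j * (1 - p.2) ^ (n - j) * F j := by
  rw [sum_range_sum_range_sub_comm]
  exact (sum_congr rfl fun k _ => sum_congr rfl fun j _ => by rw [simplexWeight_swap]).trans
    (sum_simplexWeight_mul_fst n p.swap F)

lemma sum_simplexWeight (n : ℕ) (p : ℝ × ℝ) :
    ∑ i ∈ simplexIndex n, simplexWeight n i.1 i.2 p = 1 := by
  simpa only [simplexIndex, sum_sigma, mul_one, sum_choose_mul_pow_mul_one_sub_pow]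
    using sum_simplexWeight_mul_fst n p fun _ => 1

lemma sum_simplexWeight_mul_sq (n : ℕ) (hn : n ≠ 0) (p : ℝ × ℝ) :
    ∑ i ∈ simplexIndex n, simplexWeight n i.1 i.2 p *
        (((i.1 : ℝ) / n - p.1) ^ 2 + ((i.2 : ℝ) / n - p.2) ^ 2)
      = (p.1 * (1 - p.1) + p.2 * (1 - p.2)) / n := by
  simp only [simplexIndex, sum_sigma, mul_add, sum_add_distrib, sum_simplexWeight_mul_fst,
    sum_simplexWeight_mul_snd, sum_choose_mul_pow_mul_one_sub_pow_mul_sq n hn, add_div]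

lemma abs_bernsteinSimplex_sub_le {f : ℝ × ℝ → ℝ} {M ε δ : ℝ} (hε : 0 ≤ ε) (hδ : 0 < δ)
    (hM : ∀ q ∈ simplexT2, ‖f q‖ ≤ M)
    (hf : ∀ q ∈ simplexT2, ∀ p ∈ simplexT2, dist q p < δ → dist (f q) (f p) < ε)
    {n : ℕ} (hn : n ≠ 0) {p : ℝ × ℝ} (hp : p ∈ simplexT2) :
    |bernsteinSimplex n f p - f p| ≤ ε + 2 * M / δ ^ 2 / n := by
  set C := 2 * M / δ ^ 2
  have hC : 0 ≤ C := by have := (norm_nonneg _).trans (hM p hp); positivity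
  have hnode : ∀ i ∈ simplexIndex n, ((i.1 : ℝ) / n, (i.2 : ℝ) / n) ∈ simplexT2 := by
    intro i hi
    simp only [simplexIndex, mem_sigma, mem_range] at hi
    refine ⟨by positivity, by positivity, ?_⟩
    rw [← add_div, div_le_one (by positivity)]
    exact_mod_cast (by omega : i.1 + i.2 ≤ n)
  have hvar : p.1 * (1 - p.1) + p.2 * (1 - p.2) ≤ 1 := by
    obtain ⟨h₁, h₂, h₃⟩ := hp
    nlinarith
  rw [bernsteinSimplex_eq_sum]
  calc _ ≤ ∑ i ∈ simplexIndex n, simplexWeight n i.1 i.2 p *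
          (ε + C * (((i.1 : ℝ) / n - p.1) ^ 2 + ((i.2 : ℝ) / n - p.2) ^ 2)) :=
        abs_sum_mul_sub_le (fun i _ => simplexWeight_nonneg hp) (sum_simplexWeight n p)
          fun i hi => by
            rw [← Real.dist_eq]
            refine (dist_le_add_mul_dist_sq hε hδ (hM _ (hnode i hi)) (hM p hp)
              (hf _ (hnode i hi) p hp)).trans ?_
            gcongr
            exact Prod.dist_sq_le_sq_add_sq _ _
    _ = ε * ∑ i ∈ simplexIndex n, simplexWeight n i.1 i.2 p + C * ∑ i ∈ simplexIndex n,
          simplexWeight n i.1 i.2 p * (((i.1 : ℝ) / n - p.1) ^ 2 + ((i.2 : ℝ) / n - p.2) ^ 2) := by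
        rw [mul_sum, mul_sum, ← sum_add_distrib]
        exact sum_congr rfl fun i _ => by ring
    _ = ε + C * ((p.1 * (1 - p.1) + p.2 * (1 - p.2)) / n) := by
        rw [sum_simplexWeight, sum_simplexWeight_mul_sq n hn, mul_one]
    _ ≤ ε + C / n := by
        rw [← mul_div_assoc]
        gcongr
        exact mul_le_of_le_one_right hC hvar

theorem bernsteinSimplex_tendstoUniformly (f : ℝ × ℝ → ℝ)
    (hf : ContinuousOn f simplexT2) :
    TendstoUniformlyOn (fun n p => bernsteinSimplex n f p) f Filter.atTop simplexT2 := by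
  obtain ⟨M, hM⟩ := isCompact_simplexT2.exists_bound_of_continuousOn hf
  rw [Metric.tendstoUniformlyOn_iff]
  intro ε hε
  obtain ⟨δ, hδ, hfδ⟩ := Metric.uniformContinuousOn_iff.mp
    (isCompact_simplexT2.uniformContinuousOn_of_continuous hf) (ε / 2) (half_pos hε)
  have hsmall : ∀ᶠ n : ℕ in atTop, 2 * M / δ ^ 2 / n < ε / 2 :=
    (tendsto_const_div_atTop_nhds_zero_nat _).eventually (gt_mem_nhds (half_pos hε))
  filter_upwards [hsmall, eventually_ne_atTop 0] with n hn hn₀ p hp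
  rw [dist_comm, Real.dist_eq]
  linarith [abs_bernsteinSimplex_sub_le (half_pos hε).le hδ hM hfδ hn₀ hp]
end
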